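/- Define g₁(a,b,c) = (8/9)(a² − 2√2·ac + 2c²) and h(θ) = (cos θ + √3·sin θ + √(10 − cos(2θ) + √3·sin(2θ)))/(2√2). Then for every θ ∈ [0, π/3], writing h = h(θ), one has (3/(32π))·∫_{2·arctan(h)}^{π} g₁(cos θ sin φ, sin θ sin φ, cos φ)·sin φ dφ = (6h⁴ + 8√2·h³·cos θ + 3h²·(1 + cos(2θ)) + (3 + cos(2θ))) / (18π·(1 + h²)³). -/

import Mathlib

open Real

/-- First term of the maximum defining the squared-width function of the regular
tetrahedron: `g₁(a,b,c) = (8/9)(a² − 2√2·ac + 2c²)`. -/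
noncomputable def g₁ (a b c : ℝ) : ℝ :=
  (8/9) * (a ^ 2 - 2 * Real.sqrt 2 * a * c + 2 * c ^ 2)

/-- `h(θ) = (cos θ + √3 sin θ + √(10 − cos 2θ + √3 sin 2θ)) / (2√2)`. -/
noncomputable def h (θ : ℝ) : ℝ :=
  (Real.cos θ + Real.sqrt 3 * Real.sin θ +
    Real.sqrt (10 - Real.cos (2 * θ) + Real.sqrt 3 * Real.sin (2 * θ))) / (2 * Real.sqrt 2)

/-!
Along the meridian of longitude `θ` the integrand `g₁(c sin φ, s sin φ, cos φ) sin φ`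
(with `c = cos θ`) is a cubic polynomial in `cos φ` and `sin φ`, with an explicit primitive.
At the lower limit `2 arctan t` the tangent half-angle formulas make the primitive a rational
function of `t`.
-/

lemma cos_two_mul_arctan (t : ℝ) : cos (2 * arctan t) = (1 - t ^ 2) / (1 + t ^ 2) := by
  rw [cos_two_mul, cos_sq_arctan]
  field_simp
  ring

lemma sin_two_mul_arctan (t : ℝ) : sin (2 * arctan t) = 2 * t / (1 + t ^ 2) := by
  rw [sin_eq_two_mul_tan_half_div_one_add_tan_half_sq, mul_div_cancel_left₀ _ two_ne_zero,
    tan_arctan]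

noncomputable def g₁MeridianPrimitive (c φ : ℝ) : ℝ :=
  -(8 / 27) * (3 * c ^ 2 * cos φ + (2 - c ^ 2) * cos φ ^ 3 + 2 * √2 * c * sin φ ^ 3)

lemma hasDerivAt_g₁MeridianPrimitive (c s φ : ℝ) :
    HasDerivAt (g₁MeridianPrimitive c)
      (g₁ (c * sin φ) (s * sin φ) (cos φ) * sin φ) φ := by
  have hcos := hasDerivAt_cos φ
  have H := (((hcos.const_mul (3 * c ^ 2)).add ((hcos.pow 3).const_mul (2 - c ^ 2))).add
    (((hasDerivAt_sin φ).pow 3).const_mul (2 * √2 * c))).const_mul (-(8 / 27))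
  refine (H : HasDerivAt (g₁MeridianPrimitive c) _ φ).congr_deriv ?_
  simp only [g₁, Nat.cast_ofNat]
  linear_combination (-(8 / 9) * c ^ 2 * sin φ) * sin_sq_add_cos_sq φ

lemma integral_g₁_meridian_from_two_mul_arctan (c s t : ℝ) :
    ∫ φ in (2 * arctan t)..π, g₁ (c * sin φ) (s * sin φ) (cos φ) * sin φ
      = 32 * (3 * t ^ 4 + 4 * √2 * c * t ^ 3 + 3 * c ^ 2 * t ^ 2 + c ^ 2 + 1)
        / (27 * (1 + t ^ 2) ^ 3) := by
  rw [intervalIntegral.integral_eq_sub_of_hasDerivAt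
    (fun φ _ => hasDerivAt_g₁MeridianPrimitive c s φ)
    (by apply Continuous.intervalIntegrable; unfold g₁; fun_prop)]
  simp only [g₁MeridianPrimitive, cos_pi, sin_pi, cos_two_mul_arctan, sin_two_mul_arctan]
  field_simp
  ring

theorem tetra_inner_integral_general (θ : ℝ) :
    (3 / (32 * π)) *
      ∫ φ in (2 * Real.arctan (h θ))..π,
        g₁ (Real.cos θ * Real.sin φ) (Real.sin θ * Real.sin φ) (Real.cos φ) * Real.sin φ
      = (6 * h θ ^ 4 + 8 * Real.sqrt 2 * h θ ^ 3 * Real.cos θ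
          + 3 * h θ ^ 2 * (1 + Real.cos (2 * θ)) + (3 + Real.cos (2 * θ)))
        / (18 * π * (1 + h θ ^ 2) ^ 3) := by
  rw [integral_g₁_meridian_from_two_mul_arctan, cos_two_mul]
  field_simp
  ring

/-- Closed form for the inner integral of the normalized term `g₁` of the tetrahedral
squared-width function over `φ ∈ [2 arctan (h θ), π]`. -/
theorem tetra_inner_integral (θ : ℝ) (hθ : θ ∈ Set.Icc (0 : ℝ) (π / 3)) :
    (3 / (32 * π)) *
      ∫ φ in (2 * Real.arctan (h θ))..π,
        g₁ (Real.cos θ * Real.sin φ) (Real.sin θ * Real.sin φ) (Real.cos φ) * Real.sin φ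
      = (6 * h θ ^ 4 + 8 * Real.sqrt 2 * h θ ^ 3 * Real.cos θ
          + 3 * h θ ^ 2 * (1 + Real.cos (2 * θ)) + (3 + Real.cos (2 * θ)))
        / (18 * π * (1 + h θ ^ 2) ^ 3) :=
  tetra_inner_integral_general θ
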